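/- For every real q > 1 and every x > 0, the quantity F(x) := ((x+2)^q/(x+1)^{q+1}) · ∫₀¹ t^q (x+t)^q / (x+2t)^{q-1} dt satisfies 1/(q+1) < F(x) < 2/(q+2). -/

import Mathlib

/-!
Put `u = t (x + t)`, `s = x + 2t = u'` and `G(t) = u^(q+1) / s^q`, so that `G 0 = 0` and `G 1` is the
reciprocal of the prefactor. With the weight `w = u^q / s^(q+1) > 0` the integrand is `w s²` and
`G' = w ((q+1) s² - 2qu)`. As `s² = 4u + x²`,
`(q+1) · integrand - G' = 2q w u > 0` and `2 G' - (q+2) · integrand = q w x² > 0` on `(0, 1)`,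
and integrating these strict inequalities gives `G 1 / (q+1) < ∫ integrand < 2 G 1 / (q+2)`.
-/

open Real Set MeasureTheory

section StrictComparison

variable {f g g' : ℝ → ℝ} {a b : ℝ}

/-- No integrability of `g'` is needed: the primitive of `f` minus `g` is strictly increasing. -/
theorem sub_lt_integral_of_hasDerivAt_of_lt (hab : a < b)
    (hg : ContinuousOn g (Icc a b)) (hderiv : ∀ t ∈ Ioo a b, HasDerivAt g (g' t) t)
    (hf : ContinuousOn f (Icc a b)) (hlt : ∀ t ∈ Ioo a b, g' t < f t) :
    g b - g a < ∫ t in a..b, f t := by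
  have hprim : ContinuousOn (fun t => ∫ s in a..t, f s) (Icc a b) := by
    rw [← uIcc_of_le hab.le] at hf ⊢
    exact intervalIntegral.continuousOn_primitive_interval (hf.integrableOn_compact isCompact_uIcc)
  have hmono : StrictMonoOn (fun t => (∫ s in a..t, f s) - g t) (Icc a b) := by
    refine strictMonoOn_of_hasDerivWithinAt_pos (convex_Icc a b) (hprim.sub hg)
      (f' := fun t => f t - g' t) (fun t ht => ?_) fun t ht => ?_
    · rw [interior_Icc] at ht
      have hft : ContinuousAt f t := hf.continuousAt (Icc_mem_nhds ht.1 ht.2)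
      refine ((intervalIntegral.integral_hasDerivAt_right ?_ ?_ hft).sub
        (hderiv t ht)).hasDerivWithinAt
      · exact (hf.mono (Icc_subset_Icc le_rfl ht.2.le)).intervalIntegrable_of_Icc ht.1.le
      · exact ContinuousOn.stronglyMeasurableAtFilter isOpen_Ioo (hf.mono Ioo_subset_Icc_self) t ht
    · rw [interior_Icc] at ht
      exact sub_pos.2 (hlt t ht)
  have := hmono (left_mem_Icc.2 hab.le) (right_mem_Icc.2 hab.le) hab
  simp only [intervalIntegral.integral_same] at this
  linarith

theorem integral_lt_sub_of_hasDerivAt_of_lt (hab : a < b)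
    (hg : ContinuousOn g (Icc a b)) (hderiv : ∀ t ∈ Ioo a b, HasDerivAt g (g' t) t)
    (hf : ContinuousOn f (Icc a b)) (hlt : ∀ t ∈ Ioo a b, f t < g' t) :
    ∫ t in a..b, f t < g b - g a := by
  have := sub_lt_integral_of_hasDerivAt_of_lt hab hg.neg (fun t ht => (hderiv t ht).neg) hf.neg
    fun t ht => neg_lt_neg (hlt t ht)
  simp only [Pi.neg_apply, intervalIntegral.integral_neg] at this
  linarith

end StrictComparison

section Integrand

variable {q x t : ℝ}

theorem continuousOn_rpow_div_rpow (hq : -1 ≤ q) (hx : 0 < x) :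
    ContinuousOn (fun t => (t * (x + t)) ^ (q + 1) / (x + 2 * t) ^ q) (Ici 0) := by
  have hs : ∀ t ∈ Ici (0:ℝ), 0 < x + 2 * t := fun t ht => by nlinarith [mem_Ici.1 ht]
  exact ((continuousOn_id.mul (continuousOn_const.add continuousOn_id)).rpow_const
    fun _ _ => Or.inr (by linarith)).div
    ((continuousOn_const.add (continuousOn_const.mul continuousOn_id)).rpow_const
      fun t ht => Or.inl (hs t ht).ne')
    fun t ht => (rpow_pos_of_pos (hs t ht) q).ne'

theorem continuousOn_rpow_mul_rpow_div_rpow (hq : 0 ≤ q) (hx : 0 < x) :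
    ContinuousOn (fun t => t ^ q * (x + t) ^ q / (x + 2 * t) ^ (q - 1)) (Ici 0) := by
  have hs : ∀ t ∈ Ici (0:ℝ), 0 < x + 2 * t := fun t ht => by nlinarith [mem_Ici.1 ht]
  exact ((continuousOn_id.rpow_const fun _ _ => Or.inr hq).mul
    ((continuousOn_const.add continuousOn_id).rpow_const fun _ _ => Or.inr hq)).div
    ((continuousOn_const.add (continuousOn_const.mul continuousOn_id)).rpow_const
      fun t ht => Or.inl (hs t ht).ne')
    fun t ht => (rpow_pos_of_pos (hs t ht) _).ne'

theorem hasDerivAt_rpow_div_rpow (hx : 0 ≤ x) (ht : 0 < t) :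
    HasDerivAt (fun t => (t * (x + t)) ^ (q + 1) / (x + 2 * t) ^ q)
      ((t * (x + t)) ^ q / (x + 2 * t) ^ (q + 1) *
        ((q + 1) * (x + 2 * t) ^ 2 - 2 * q * (t * (x + t)))) t := by
  have hu : 0 < t * (x + t) := by positivity
  have hs : 0 < x + 2 * t := by positivity
  have hu' : HasDerivAt (fun t => t * (x + t)) (x + 2 * t) t :=
    ((hasDerivAt_id' t).mul ((hasDerivAt_id' t).const_add x)).congr_deriv (by ring)
  have hs' : HasDerivAt (fun t => x + 2 * t) 2 t := by
    simpa using ((hasDerivAt_id t).const_mul 2).const_add x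
  refine ((hu'.rpow_const (p := q + 1) (Or.inl hu.ne')).div
    (hs'.rpow_const (p := q) (Or.inl hs.ne')) (by positivity)).congr_deriv ?_
  rw [add_sub_cancel_right, rpow_add_one hu.ne', rpow_sub_one hs.ne', rpow_add_one hs.ne']
  field_simp

theorem rpow_mul_rpow_div_rpow_eq (hx : 0 ≤ x) (ht : 0 < t) :
    t ^ q * (x + t) ^ q / (x + 2 * t) ^ (q - 1) =
      (t * (x + t)) ^ q / (x + 2 * t) ^ (q + 1) * (x + 2 * t) ^ 2 := by
  have hs : 0 < x + 2 * t := by positivity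
  rw [← mul_rpow ht.le (by positivity), rpow_sub_one hs.ne', rpow_add_one hs.ne']
  field_simp

theorem rpow_mul_rpow_div_rpow_mem_Ioo (hq : 0 < q) (hx : 0 < x) (ht : 0 < t) :
    t ^ q * (x + t) ^ q / (x + 2 * t) ^ (q - 1) ∈ Ioo
      ((t * (x + t)) ^ q / (x + 2 * t) ^ (q + 1) *
        ((q + 1) * (x + 2 * t) ^ 2 - 2 * q * (t * (x + t))) / (q + 1))
      (2 * ((t * (x + t)) ^ q / (x + 2 * t) ^ (q + 1) *
        ((q + 1) * (x + 2 * t) ^ 2 - 2 * q * (t * (x + t)))) / (q + 2)) := by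
  rw [rpow_mul_rpow_div_rpow_eq hx.le ht]
  have hw : 0 < (t * (x + t)) ^ q / (x + 2 * t) ^ (q + 1) := by positivity
  set w := (t * (x + t)) ^ q / (x + 2 * t) ^ (q + 1)
  have hu : 0 < t * (x + t) := by positivity
  set u := t * (x + t)
  have hsq : (x + 2 * t) ^ 2 = 4 * u + x ^ 2 := by ring
  constructor
  · rw [div_lt_iff₀ (by positivity)]
    nlinarith [mul_pos (mul_pos hq hw) hu]
  · rw [lt_div_iff₀ (by positivity), hsq]
    nlinarith [mul_pos (mul_pos hq hw) (pow_pos hx 2)]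

end Integrand

theorem stmt_2 (q x : ℝ) (hq : 1 < q) (hx : 0 < x) :
    1 / (q + 1) <
      ((x + 2) ^ q / (x + 1) ^ (q + 1)) *
        ∫ t in (0:ℝ)..1, t ^ q * (x + t) ^ q / (x + 2 * t) ^ (q - 1) ∧
    ((x + 2) ^ q / (x + 1) ^ (q + 1)) *
        (∫ t in (0:ℝ)..1, t ^ q * (x + t) ^ q / (x + 2 * t) ^ (q - 1)) <
      2 / (q + 2) := by
  have hq0 : 0 < q := by linarith
  have hsub : Icc (0:ℝ) 1 ⊆ Ici 0 := Icc_subset_Ici_self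
  have hG := (continuousOn_rpow_div_rpow (q := q) (by linarith) hx).mono hsub
  have hf := (continuousOn_rpow_mul_rpow_div_rpow hq0.le hx).mono hsub
  have hlow := sub_lt_integral_of_hasDerivAt_of_lt zero_lt_one (hG.div_const (q + 1))
    (fun t ht => (hasDerivAt_rpow_div_rpow hx.le ht.1).div_const _) hf
    fun t ht => (rpow_mul_rpow_div_rpow_mem_Ioo hq0 hx ht.1).1
  have hup := integral_lt_sub_of_hasDerivAt_of_lt zero_lt_one
    ((continuousOn_const.mul hG).div_const (q + 2))
    (fun t ht => ((hasDerivAt_rpow_div_rpow hx.le ht.1).const_mul 2).div_const _) hf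
    fun t ht => (rpow_mul_rpow_div_rpow_mem_Ioo hq0 hx ht.1).2
  simp only [Pi.mul_apply, zero_mul, zero_rpow (by linarith : q + 1 ≠ 0), zero_div, one_mul,
    mul_one, mul_zero, sub_zero] at hlow hup
  have hG1 : 0 < (x + 1) ^ (q + 1) / (x + 2) ^ q := by positivity
  rw [← inv_div ((x + 1) ^ (q + 1)), inv_mul_eq_div, lt_div_iff₀ hG1, div_lt_iff₀ hG1]
  constructor <;> linarith [one_div_mul_eq_div (q + 1) ((x + 1) ^ (q + 1) / (x + 2) ^ q),
    div_mul_eq_mul_div 2 (q + 2) ((x + 1) ^ (q + 1) / (x + 2) ^ q)]
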